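/- Let (G, H, ∂, α) be a crossed module of groups. Define on the semidirect product H ⋊ G (with multiplication (h₂,g₂)·(h₁,g₁) = (h₂ · h₁^{g₂}, g₂g₁)) the maps d₀(h,g) = g, d₁(h,g) = ∂(h)·g, unit s₀(g) = (1,g), and composition (h₂, ∂(h₁)·g) ∘ (h₁, g) = (h₂h₁, g) whenever d₁(h₁,g) = d₀(h₂, ∂(h₁)g). Then these data define a group object in the category of groupoids: (H ⋊ G ⇉ G) is a groupoid and all structure maps (source, target, unit, composition, groupoid inverse) are group homomorphisms. -/
import Mathlib


/-- A crossed module of groups: `∂ : H → G` together with an action of `G` on `H` by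
automorphisms, satisfying equivariance and the Peiffer identity. -/
structure CrossedModule (G H : Type*) [Group G] [Group H] where
  map : H →* G
  act : G →* MulAut H
  equivariance : ∀ (g : G) (h : H), map (act g h) = g * map h * g⁻¹
  peiffer : ∀ h₁ h₂ : H, act (map h₁) h₂ = h₁ * h₂ * h₁⁻¹

variable {G H : Type*} [Group G] [Group H]

/-- Source map `d₀(h,g) = g` on the semidirect product `H ⋊ G`. -/
def CrossedModule.d0 (cm : CrossedModule G H) : H ⋊[cm.act] G → G := fun a => a.right

/-- Target map `d₁(h,g) = ∂(h)·g`. -/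
def CrossedModule.d1 (cm : CrossedModule G H) : H ⋊[cm.act] G → G :=
  fun a => cm.map a.left * a.right

/-- Unit map `s₀(g) = (1,g)`. -/
def CrossedModule.unit (cm : CrossedModule G H) : G → H ⋊[cm.act] G := fun g => ⟨1, g⟩

/-- Groupoid composition `(h₂, ∂(h₁)·g) ∘ (h₁, g) = (h₂h₁, g)` (defined on all pairs;
only its values on composable pairs, `d₀ a = d₁ b`, are relevant). -/
def CrossedModule.comp (cm : CrossedModule G H) :
    H ⋊[cm.act] G → H ⋊[cm.act] G → H ⋊[cm.act] G :=
  fun a b => ⟨a.left * b.left, b.right⟩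

/-- Groupoid inverse `(h,g) ↦ (h⁻¹, ∂(h)·g)`. -/
def CrossedModule.ginv (cm : CrossedModule G H) : H ⋊[cm.act] G → H ⋊[cm.act] G :=
  fun a => ⟨a.left⁻¹, cm.map a.left * a.right⟩

/-- the data associated with a crossed module of groups make
`H ⋊ G ⇉ G` a groupoid, and all structure maps (source, target, unit, composition,
groupoid inverse) are group homomorphisms, i.e. `H ⋊ G ⇉ G` is a group object in the
category of groupoids. -/
theorem crossedModule_groupObject_in_groupoids (cm : CrossedModule G H) :
    -- groupoid axioms
    (∀ g, cm.d0 (cm.unit g) = g) ∧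
    (∀ g, cm.d1 (cm.unit g) = g) ∧
    (∀ a b, cm.d0 a = cm.d1 b → cm.d0 (cm.comp a b) = cm.d0 b) ∧
    (∀ a b, cm.d0 a = cm.d1 b → cm.d1 (cm.comp a b) = cm.d1 a) ∧
    (∀ a, cm.comp a (cm.unit (cm.d0 a)) = a) ∧
    (∀ a, cm.comp (cm.unit (cm.d1 a)) a = a) ∧
    (∀ a b c, cm.d0 a = cm.d1 b → cm.d0 b = cm.d1 c →
        cm.comp (cm.comp a b) c = cm.comp a (cm.comp b c)) ∧
    (∀ a, cm.d0 (cm.ginv a) = cm.d1 a) ∧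
    (∀ a, cm.d1 (cm.ginv a) = cm.d0 a) ∧
    (∀ a, cm.comp a (cm.ginv a) = cm.unit (cm.d1 a)) ∧
    (∀ a, cm.comp (cm.ginv a) a = cm.unit (cm.d0 a)) ∧
    -- all structure maps are group homomorphisms
    (∀ a b, cm.d0 (a * b) = cm.d0 a * cm.d0 b) ∧
    (∀ a b, cm.d1 (a * b) = cm.d1 a * cm.d1 b) ∧
    (∀ g g', cm.unit (g * g') = cm.unit g * cm.unit g') ∧
    (∀ a b a' b', cm.d0 a = cm.d1 b → cm.d0 a' = cm.d1 b' →
        cm.comp a b * cm.comp a' b' = cm.comp (a * a') (b * b')) ∧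
    (∀ a b, cm.ginv (a * b) = cm.ginv a * cm.ginv b) := by
  refine ⟨fun g => rfl, ?_, fun a b _ => rfl, ?_, ?_, ?_, fun a b c _ _ => ?_,
    fun a => rfl, ?_, ?_, ?_, fun a b => rfl, ?_, ?_, ?_, ?_⟩
  · intro g; simp [CrossedModule.d1, CrossedModule.unit]
  · intro a b h
    simp only [CrossedModule.d0, CrossedModule.d1] at h
    simp [CrossedModule.d1, CrossedModule.comp, mul_assoc, h]
  · intro a
    simp [CrossedModule.comp, CrossedModule.unit, CrossedModule.d0]
  · intro a
    ext <;> simp [CrossedModule.comp, CrossedModule.unit, CrossedModule.d1]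
  · ext <;> simp [CrossedModule.comp, mul_assoc]
  · intro a
    simp [CrossedModule.ginv, CrossedModule.d1, CrossedModule.d0, mul_assoc,
      cm.equivariance]
  · intro a
    ext <;> simp [CrossedModule.comp, CrossedModule.ginv, CrossedModule.unit,
      CrossedModule.d1]
  · intro a
    ext <;> simp [CrossedModule.comp, CrossedModule.ginv, CrossedModule.unit,
      CrossedModule.d0]
  · intro a b
    simp only [CrossedModule.d1, SemidirectProduct.mul_left,
      SemidirectProduct.mul_right, map_mul, cm.equivariance]
    group
  · intro g g'
    ext <;> simp [CrossedModule.unit]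
  · intro a b a' b' h h'
    simp only [CrossedModule.d0, CrossedModule.d1] at h h'
    ext
    · simp only [CrossedModule.comp, SemidirectProduct.mul_left, map_mul, h]
      rw [MulAut.mul_apply, cm.peiffer]
      group
    · simp [CrossedModule.comp]
  · intro a b
    ext
    · simp only [CrossedModule.ginv, SemidirectProduct.mul_left,
        SemidirectProduct.mul_right, map_mul, mul_inv_rev, MulAut.mul_apply,
        cm.peiffer, map_inv]
      group
    · simp only [CrossedModule.ginv, SemidirectProduct.mul_left,
        SemidirectProduct.mul_right, map_mul, cm.equivariance]
      group
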